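/- For integers n ≥ 2 and m ≥ 2, let P_n and P_m be paths with n and m vertices respectively. Then AT(P_n +_S P_m) = 2 if n = 2 and m = 2, and AT(P_n +_S P_m) = 3 otherwise. -/

import Mathlib

open scoped Classical

/-- The outdegree of a vertex `v` in a finite set of arcs `A`. -/
noncomputable def arcOutDeg {V : Type*} (A : Finset (V × V)) (v : V) : ℕ :=
  (A.filter fun a => a.1 = v).card

/-- The indegree of a vertex `v` in a finite set of arcs `A`. -/
noncomputable def arcInDeg {V : Type*} (A : Finset (V × V)) (v : V) : ℕ :=
  (A.filter fun a => a.2 = v).card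

/-- `A` is an orientation of the simple graph `G`: every arc of `A` joins adjacent
vertices, and every edge of `G` receives exactly one of its two possible directions. -/
def IsOrientation {V : Type*} (G : SimpleGraph V) (A : Finset (V × V)) : Prop :=
  (∀ a ∈ A, G.Adj a.1 a.2) ∧ ∀ u v : V, G.Adj u v → ((u, v) ∈ A ↔ (v, u) ∉ A)

/-- A set of arcs is Eulerian if at every vertex the indegree equals the outdegree. -/
def IsEulerianSub {V : Type*} (B : Finset (V × V)) : Prop :=
  ∀ v : V, arcInDeg B v = arcOutDeg B v

/-- An orientation (given by its arc set `A`) is an Alon–Tarsi orientation if the number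
of its even Eulerian sub-digraphs differs from the number of its odd Eulerian
sub-digraphs. -/
def IsATOrientation {V : Type*} (A : Finset (V × V)) : Prop :=
  (A.powerset.filter fun B => IsEulerianSub B ∧ Even B.card).card ≠
    (A.powerset.filter fun B => IsEulerianSub B ∧ ¬ Even B.card).card

/-- The Alon–Tarsi number of `G`: the least `k` such that `G` has an Alon–Tarsi
orientation with maximum outdegree at most `k - 1` (i.e. `< k`). -/
noncomputable def alonTarsiNumber {V : Type*} (G : SimpleGraph V) : ℕ :=
  sInf {k : ℕ | ∃ A : Finset (V × V),
    IsOrientation G A ∧ IsATOrientation A ∧ ∀ v : V, arcOutDeg A v < k}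

/-- A graph is `k`-degenerate if every nonempty (induced) subgraph has a vertex of
degree at most `k`. -/
def Degenerate {V : Type*} (k : ℕ) (G : SimpleGraph V) : Prop :=
  ∀ s : Finset V, s.Nonempty → ∃ v ∈ s, (s.filter fun u => G.Adj v u).card ≤ k

/-- The subdivision graph `S(G)`: each edge `uv` of `G` is replaced by a path `u-e-v`
through the new vertex `e` corresponding to `uv`. -/
def subdivisionGraph {V : Type*} (G : SimpleGraph V) : SimpleGraph (V ⊕ ↥G.edgeSet) :=
  SimpleGraph.fromRel fun a b =>
    match a, b with
    | Sum.inl u, Sum.inr e => u ∈ (e : Sym2 V)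
    | _, _ => False

/-- The graph `R(G)`: `G` together with, for each edge `uv`, a new vertex joined to
`u` and `v`. -/
def rGraph {V : Type*} (G : SimpleGraph V) : SimpleGraph (V ⊕ ↥G.edgeSet) :=
  SimpleGraph.fromRel fun a b =>
    match a, b with
    | Sum.inl u, Sum.inl v => G.Adj u v
    | Sum.inl u, Sum.inr e => u ∈ (e : Sym2 V)
    | _, _ => False

/-- The graph `Q(G)`: new vertices joined to the endpoints of their edges, and two new
vertices joined iff the corresponding edges of `G` share an endpoint; original
vertices are pairwise nonadjacent. -/
def qGraph {V : Type*} (G : SimpleGraph V) : SimpleGraph (V ⊕ ↥G.edgeSet) :=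
  SimpleGraph.fromRel fun a b =>
    match a, b with
    | Sum.inl u, Sum.inr e => u ∈ (e : Sym2 V)
    | Sum.inr e, Sum.inr f => e ≠ f ∧ ∃ u : V, u ∈ (e : Sym2 V) ∧ u ∈ (f : Sym2 V)
    | _, _ => False

/-- The total graph `T(G)`. -/
def tGraph {V : Type*} (G : SimpleGraph V) : SimpleGraph (V ⊕ ↥G.edgeSet) :=
  SimpleGraph.fromRel fun a b =>
    match a, b with
    | Sum.inl u, Sum.inl v => G.Adj u v
    | Sum.inl u, Sum.inr e => u ∈ (e : Sym2 V)
    | Sum.inr e, Sum.inr f => e ≠ f ∧ ∃ u : V, u ∈ (e : Sym2 V) ∧ u ∈ (f : Sym2 V)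
    | _, _ => False

/-- The `F`-sum construction: given a graph `K` on `V ⊕ E` (playing the role of `F(G)`,
whose "original" vertices are those of the form `Sum.inl u`) and a graph `H` on `W`,
two vertices `(u₁, u₂)` and `(v₁, v₂)` are adjacent iff either `u₁ = v₁` is an original
vertex and `u₂v₂ ∈ E(H)`, or `u₂ = v₂` and `u₁v₁ ∈ E(K)`. -/
def fSum {V E W : Type*} (K : SimpleGraph (V ⊕ E)) (H : SimpleGraph W) :
    SimpleGraph ((V ⊕ E) × W) :=
  SimpleGraph.fromRel fun a b =>
    (a.1 = b.1 ∧ (∃ u : V, a.1 = Sum.inl u) ∧ H.Adj a.2 b.2) ∨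
      (a.2 = b.2 ∧ K.Adj a.1 b.1)

/-- The `S`-sum `G +_S H`. -/
def sSum {V W : Type*} (G : SimpleGraph V) (H : SimpleGraph W) :
    SimpleGraph ((V ⊕ ↥G.edgeSet) × W) :=
  fSum (subdivisionGraph G) H

/-- The `R`-sum `G +_R H`. -/
def rSum {V W : Type*} (G : SimpleGraph V) (H : SimpleGraph W) :
    SimpleGraph ((V ⊕ ↥G.edgeSet) × W) :=
  fSum (rGraph G) H

/-- The `Q`-sum `G +_Q H`. -/
def qSum {V W : Type*} (G : SimpleGraph V) (H : SimpleGraph W) :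
    SimpleGraph ((V ⊕ ↥G.edgeSet) × W) :=
  fSum (qGraph G) H

/-- The `T`-sum `G +_T H`. -/
def tSum {V W : Type*} (G : SimpleGraph V) (H : SimpleGraph W) :
    SimpleGraph ((V ⊕ ↥G.edgeSet) × W) :=
  fSum (tGraph G) H

/-- The star graph `S_n = K_{1,n}`. -/
def starGraph (n : ℕ) : SimpleGraph (Fin 1 ⊕ Fin n) :=
  completeBipartiteGraph (Fin 1) (Fin n)

/-!
In coordinates, `S(P_n)` is the path `P_{2n-1}` whose even vertices are the original ones, so
`P_n +_S P_m` is the grid `sGrid (2n-1) m` on `Fin (2n-1) × Fin m` with vertical edges only in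
even columns. Orienting every edge towards the larger value of `column + row` gives an acyclic
orientation, whose only Eulerian subdigraph is empty, with outdegree at most `2`; so `AT ≤ 3`.
Conversely, an orientation of maximum outdegree `1` has at most as many arcs as vertices, which
fails on the subgraph `sGrid 5 2` (when `n ≥ 3`) or `sGrid 3 3` (when `m ≥ 3`). For
`n = m = 2` the graph is a `6`-cycle, whose cyclic orientation has outdegree `1` and only the
two Eulerian subdigraphs `∅` and the whole cycle, both of even size.
-/

open SimpleGraph Finset

section Orientation

variable {V W : Type*}

theorem IsEulerianSub.sum_snd_eq_sum_fst [Fintype V] {B : Finset (V × V)}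
    (hB : IsEulerianSub B) (φ : V → ℕ) : ∑ a ∈ B, φ a.2 = ∑ a ∈ B, φ a.1 := by
  rw [← sum_fiberwise B Prod.snd fun a => φ a.2, ← sum_fiberwise B Prod.fst fun a => φ a.1]
  refine sum_congr rfl fun v _ => ?_
  rw [sum_congr rfl fun a ha => congrArg φ (mem_filter.mp ha).2,
    sum_congr rfl fun a ha => congrArg φ (mem_filter.mp ha).2, sum_const, sum_const]
  exact congrArg (· • φ v) (hB v)

theorem IsEulerianSub.eq_empty_of_lt [Fintype V] {B : Finset (V × V)} (hB : IsEulerianSub B)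
    (φ : V → ℕ) (hφ : ∀ a ∈ B, φ a.1 < φ a.2) : B = ∅ := by
  by_contra hne
  have := sum_lt_sum_of_nonempty (nonempty_iff_ne_empty.mpr hne) hφ
  exact this.ne (hB.sum_snd_eq_sum_fst φ).symm

theorem IsEulerianSub.exists_mem_of_mem {B : Finset (V × V)} (hB : IsEulerianSub B) {u v : V}
    (h : (u, v) ∈ B) : ∃ w, (v, w) ∈ B := by
  have hin : 0 < arcInDeg B v := card_pos.mpr ⟨(u, v), mem_filter.mpr ⟨h, rfl⟩⟩
  rw [hB v] at hin
  obtain ⟨⟨v', w⟩, hvw⟩ := card_pos.mp hin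
  obtain ⟨hmem, hv' : v' = v⟩ := mem_filter.mp hvw
  exact ⟨w, hv' ▸ hmem⟩

theorem isEulerianSub_empty : IsEulerianSub (∅ : Finset (V × V)) := fun v => by
  simp [arcInDeg, arcOutDeg]

theorem isATOrientation_of_forall_even {A : Finset (V × V)}
    (h : ∀ B ⊆ A, IsEulerianSub B → Even B.card) : IsATOrientation A := by
  have hodd : (A.powerset.filter fun B => IsEulerianSub B ∧ ¬ Even B.card) = ∅ :=
    filter_eq_empty_iff.mpr fun B hB hB' => hB'.2 (h B (mem_powerset.mp hB) hB'.1)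
  have hempty : ∅ ∈ A.powerset.filter fun B => IsEulerianSub B ∧ Even B.card :=
    mem_filter.mpr ⟨empty_mem_powerset A, isEulerianSub_empty, by simp⟩
  rw [IsATOrientation, hodd, card_empty]
  exact (card_pos.mpr ⟨∅, hempty⟩).ne'

theorem IsOrientation.exists_pos_arcOutDeg {G : SimpleGraph V} {A : Finset (V × V)}
    (hA : IsOrientation G A) {u v : V} (huv : G.Adj u v) : ∃ w, 0 < arcOutDeg A w := by
  by_cases h : (u, v) ∈ A
  · exact ⟨u, card_pos.mpr ⟨(u, v), mem_filter.mpr ⟨h, rfl⟩⟩⟩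
  · have h' : (v, u) ∈ A := not_not.mp fun h' => h ((hA.2 u v huv).mpr h')
    exact ⟨v, card_pos.mpr ⟨(v, u), mem_filter.mpr ⟨h', rfl⟩⟩⟩

theorem sum_arcOutDeg [Fintype V] (A : Finset (V × V)) : ∑ v, arcOutDeg A v = A.card :=
  (card_eq_sum_card_fiberwise fun a _ => mem_univ a.1).symm

theorem IsOrientation.card_eq_card_edgeFinset {G : SimpleGraph V} [Fintype G.edgeSet]
    {A : Finset (V × V)} (hA : IsOrientation G A) : A.card = #G.edgeFinset := by
  refine card_bij (fun a _ => s(a.1, a.2)) (fun a ha => by simpa using hA.1 a ha) ?_ ?_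
  · rintro ⟨a₁, a₂⟩ ha ⟨b₁, b₂⟩ hb h
    rcases Sym2.eq_iff.mp h with ⟨rfl, rfl⟩ | ⟨rfl, rfl⟩
    · rfl
    · exact absurd ha ((hA.2 a₂ a₁ (hA.1 _ hb)).mp hb)
  · intro e he
    induction e using Sym2.ind with
    | h u v =>
      have huv : G.Adj u v := by simpa using he
      by_cases h : (u, v) ∈ A
      · exact ⟨(u, v), h, rfl⟩
      · exact ⟨(v, u), not_not.mp fun h' => h ((hA.2 u v huv).mpr h'), Sym2.eq_swap⟩

noncomputable def arcsComap [Fintype W] (H : SimpleGraph W) (f : W → V) (A : Finset (V × V)) :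
    Finset (W × W) :=
  univ.filter fun p => H.Adj p.1 p.2 ∧ (f p.1, f p.2) ∈ A

theorem IsOrientation.arcsComap [Fintype W] {G : SimpleGraph V} {H : SimpleGraph W}
    {A : Finset (V × V)} (hA : IsOrientation G A) (f : H →g G) :
    IsOrientation H (arcsComap H f A) := by
  refine ⟨fun a ha => (mem_filter.mp ha).2.1, fun u v huv => ?_⟩
  simp only [_root_.arcsComap, mem_filter, mem_univ, true_and, huv, huv.symm]
  exact hA.2 _ _ (f.map_adj huv)

theorem arcOutDeg_arcsComap_le [Fintype W] (H : SimpleGraph W) {f : W → V}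
    (hf : Function.Injective f) (A : Finset (V × V)) (w : W) :
    arcOutDeg (arcsComap H f A) w ≤ arcOutDeg A (f w) := by
  refine card_le_card_of_injOn (Prod.map f f) (fun p hp => ?_) (hf.prodMap hf).injOn
  obtain ⟨hpA, rfl⟩ := mem_filter.mp hp
  exact mem_filter.mpr ⟨(mem_filter.mp hpA).2.2, rfl⟩

theorem exists_lt_arcOutDeg_of_hom [Fintype W] {G : SimpleGraph V} {H : SimpleGraph W}
    [Fintype H.edgeSet] (f : H →g G) (hf : Function.Injective f) {A : Finset (V × V)}
    (hA : IsOrientation G A) {k : ℕ} (hk : k * Fintype.card W < #H.edgeFinset) :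
    ∃ v, k < arcOutDeg A v := by
  by_contra! hle
  have : #H.edgeFinset ≤ k * Fintype.card W := by
    rw [← (hA.arcsComap f).card_eq_card_edgeFinset, ← sum_arcOutDeg, mul_comm, ← card_univ,
      ← smul_eq_mul, ← sum_const]
    exact sum_le_sum fun w _ => (arcOutDeg_arcsComap_le H hf A w).trans (hle _)
  omega

end Orientation

section AlonTarsiNumber

variable {V W : Type*}

noncomputable def potentialOrientation [Fintype V] (G : SimpleGraph V) (φ : V → ℕ) :
    Finset (V × V) :=
  univ.filter fun a => G.Adj a.1 a.2 ∧ φ a.1 < φ a.2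

theorem mem_potentialOrientation [Fintype V] {G : SimpleGraph V} {φ : V → ℕ} {a : V × V} :
    a ∈ potentialOrientation G φ ↔ G.Adj a.1 a.2 ∧ φ a.1 < φ a.2 := by
  simp [potentialOrientation]

theorem isOrientation_potentialOrientation [Fintype V] {G : SimpleGraph V} {φ : V → ℕ}
    (hφ : ∀ u v, G.Adj u v → φ u ≠ φ v) : IsOrientation G (potentialOrientation G φ) := by
  refine ⟨fun a ha => (mem_potentialOrientation.mp ha).1, fun u v huv => ?_⟩
  simp only [mem_potentialOrientation, huv, huv.symm, true_and, not_lt]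
  have := hφ u v huv
  omega

theorem isATOrientation_potentialOrientation [Fintype V] (G : SimpleGraph V) (φ : V → ℕ) :
    IsATOrientation (potentialOrientation G φ) :=
  isATOrientation_of_forall_even fun B hB hE => by
    rw [hE.eq_empty_of_lt φ fun a ha => (mem_potentialOrientation.mp (hB ha)).2, card_empty]
    exact Even.zero

theorem alonTarsiNumber_eq_succ {G : SimpleGraph V} {k : ℕ} {A : Finset (V × V)}
    (hA : IsOrientation G A) (hAT : IsATOrientation A) (hle : ∀ v, arcOutDeg A v ≤ k)
    (hmin : ∀ A', IsOrientation G A' → ∃ v, k ≤ arcOutDeg A' v) :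
    alonTarsiNumber G = k + 1 := by
  have hmem : k + 1 ∈ {k : ℕ | ∃ A : Finset (V × V),
      IsOrientation G A ∧ IsATOrientation A ∧ ∀ v : V, arcOutDeg A v < k} :=
    ⟨A, hA, hAT, fun v => Nat.lt_succ_of_le (hle v)⟩
  refine le_antisymm (Nat.sInf_le hmem) (le_csInf ⟨_, hmem⟩ ?_)
  rintro j ⟨A', hA', -, hlt⟩
  obtain ⟨v, hv⟩ := hmin A' hA'
  exact hv.trans_lt (hlt v)

def mapArcs (e : V ≃ W) (A : Finset (V × V)) : Finset (W × W) :=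
  A.map (e.prodCongr e).toEmbedding

theorem arcOutDeg_mapArcs (e : V ≃ W) (A : Finset (V × V)) (v : V) :
    arcOutDeg (mapArcs e A) (e v) = arcOutDeg A v := by
  rw [arcOutDeg, arcOutDeg, mapArcs, filter_map, card_map]
  simp

theorem arcInDeg_mapArcs (e : V ≃ W) (A : Finset (V × V)) (v : V) :
    arcInDeg (mapArcs e A) (e v) = arcInDeg A v := by
  rw [arcInDeg, arcInDeg, mapArcs, filter_map, card_map]
  simp

theorem isEulerianSub_mapArcs_iff (e : V ≃ W) (B : Finset (V × V)) :
    IsEulerianSub (mapArcs e B) ↔ IsEulerianSub B := by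
  refine ⟨fun h v => by simpa only [arcInDeg_mapArcs, arcOutDeg_mapArcs] using h (e v),
    fun h w => ?_⟩
  obtain ⟨v, rfl⟩ := e.surjective w
  rw [arcInDeg_mapArcs, arcOutDeg_mapArcs, h v]

theorem IsATOrientation.mapArcs {A : Finset (V × V)} (hA : IsATOrientation A) (e : V ≃ W) :
    IsATOrientation (_root_.mapArcs e A) := by
  have key : ∀ (P : ℕ → Prop) [DecidablePred P],
      (A.powerset.filter fun B => IsEulerianSub B ∧ P B.card).card =
        ((_root_.mapArcs e A).powerset.filter fun B => IsEulerianSub B ∧ P B.card).card := by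
    intro P _
    refine card_bij (fun B _ => _root_.mapArcs e B) (fun B hB => ?_)
      (fun B _ C _ h => map_injective _ h) (fun C hC => ?_)
    · simp only [mem_filter, mem_powerset] at hB ⊢
      rw [isEulerianSub_mapArcs_iff, _root_.mapArcs, card_map]
      exact ⟨map_subset_map.mpr hB.1, hB.2⟩
    · simp only [mem_filter, mem_powerset] at hC
      obtain ⟨B, hB, rfl⟩ := subset_map_iff.mp hC.1
      rw [← _root_.mapArcs, isEulerianSub_mapArcs_iff, _root_.mapArcs, card_map] at hC
      exact ⟨B, mem_filter.mpr ⟨mem_powerset.mpr hB, hC.2⟩, rfl⟩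
  rw [IsATOrientation, ← key Even, ← key fun k => ¬ Even k]
  exact hA

theorem IsOrientation.mapArcs {G : SimpleGraph V} {H : SimpleGraph W} {A : Finset (V × V)}
    (hA : IsOrientation G A) (e : G ≃g H) : IsOrientation H (_root_.mapArcs e.toEquiv A) := by
  refine ⟨fun a ha => ?_, fun u v huv => ?_⟩
  · obtain ⟨b, hb, rfl⟩ := mem_map.mp ha
    exact e.map_adj_iff.mpr (hA.1 b hb)
  · obtain ⟨u, rfl⟩ := e.surjective u
    obtain ⟨v, rfl⟩ := e.surjective v
    have hmem : ∀ x y, (e x, e y) ∈ _root_.mapArcs e.toEquiv A ↔ (x, y) ∈ A := fun x y =>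
      mem_map' (a := (x, y)) (s := A) (e.toEquiv.prodCongr e.toEquiv).toEmbedding
    rw [hmem, hmem]
    exact hA.2 u v (e.map_adj_iff.mp huv)

theorem exists_isATOrientation_of_iso {G : SimpleGraph V} {H : SimpleGraph W} (e : G ≃g H)
    {k : ℕ} (h : ∃ A, IsOrientation G A ∧ IsATOrientation A ∧ ∀ v, arcOutDeg A v < k) :
    ∃ A, IsOrientation H A ∧ IsATOrientation A ∧ ∀ v, arcOutDeg A v < k := by
  obtain ⟨A, hA, hAT, hlt⟩ := h
  refine ⟨mapArcs e.toEquiv A, hA.mapArcs e, hAT.mapArcs e.toEquiv, fun w => ?_⟩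
  obtain ⟨v, rfl⟩ := e.surjective w
  exact (arcOutDeg_mapArcs e.toEquiv A v).trans_lt (hlt v)

theorem alonTarsiNumber_congr {G : SimpleGraph V} {H : SimpleGraph W} (e : G ≃g H) :
    alonTarsiNumber G = alonTarsiNumber H :=
  congrArg sInf <| Set.ext fun _ =>
    ⟨exists_isATOrientation_of_iso e, exists_isATOrientation_of_iso e.symm⟩

end AlonTarsiNumber

section CycleGraph

variable {k : ℕ} [NeZero k]

def cyclicOrientation (k : ℕ) [NeZero k] : Finset (Fin k × Fin k) :=
  univ.map ⟨fun i => (i, i + 1), fun _ _ h => (Prod.ext_iff.mp h).1⟩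

theorem mem_cyclicOrientation {a : Fin k × Fin k} :
    a ∈ cyclicOrientation k ↔ a.2 = a.1 + 1 := by
  simp only [cyclicOrientation, mem_map, mem_univ, true_and]
  exact ⟨by rintro ⟨i, rfl⟩; rfl, fun h => ⟨a.1, Prod.ext rfl h.symm⟩⟩

theorem cycleGraph_adj_add_one (hk : 3 ≤ k) (i : Fin k) : (cycleGraph k).Adj i (i + 1) := by
  rw [cycleGraph_adj', add_sub_cancel_left, Fin.val_one', Nat.mod_eq_of_lt (by omega)]
  exact Or.inr rfl

theorem isOrientation_cyclicOrientation (hk : 3 ≤ k) :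
    IsOrientation (cycleGraph k) (cyclicOrientation k) := by
  have hone : (1 : Fin k).val = 1 := by rw [Fin.val_one', Nat.mod_eq_of_lt (by omega)]
  refine ⟨fun a ha => ?_, fun u v huv => ?_⟩
  · rw [mem_cyclicOrientation.mp ha]
    exact cycleGraph_adj_add_one hk a.1
  · simp only [mem_cyclicOrientation]
    constructor
    · rintro rfl h
      have htwo : (1 + 1 : Fin k) = 0 := by
        rw [add_assoc] at h
        simpa using h
      have := congrArg Fin.val htwo
      rw [Fin.val_add, hone, Fin.val_zero, Nat.mod_eq_of_lt (by omega)] at this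
      omega
    · intro h
      rcases cycleGraph_adj'.mp huv with huv | huv
      · exact absurd (sub_eq_iff_eq_add'.mp (Fin.ext (huv.trans hone.symm))) h
      · rw [sub_eq_iff_eq_add.mp (Fin.ext (huv.trans hone.symm)), add_comm]

theorem arcOutDeg_cyclicOrientation (v : Fin k) : arcOutDeg (cyclicOrientation k) v = 1 := by
  rw [arcOutDeg, card_eq_one]
  refine ⟨(v, v + 1), ext fun a => ?_⟩
  simp only [mem_filter, mem_cyclicOrientation, mem_singleton]
  constructor
  · rintro ⟨h2, rfl⟩; exact Prod.ext rfl h2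
  · rintro rfl; exact ⟨rfl, rfl⟩

open Fin.NatCast in
theorem eq_cyclicOrientation_of_isEulerianSub {B : Finset (Fin k × Fin k)}
    (hB : B ⊆ cyclicOrientation k) (hE : IsEulerianSub B) (hne : B.Nonempty) :
    B = cyclicOrientation k := by
  obtain ⟨⟨i, i'⟩, hi⟩ := hne
  have hi' : i' = i + 1 := mem_cyclicOrientation.mp (hB hi)
  subst hi'
  have hstep : ∀ j : Fin k, (j, j + 1) ∈ B → (j + 1, j + 1 + 1) ∈ B := fun j hj => by
    obtain ⟨w, hw⟩ := hE.exists_mem_of_mem hj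
    obtain rfl : w = j + 1 + 1 := mem_cyclicOrientation.mp (hB hw)
    exact hw
  have hall : ∀ n : ℕ, (i + (n : Fin k), i + (n : Fin k) + 1) ∈ B := by
    intro n
    induction n with
    | zero => simpa using hi
    | succ n ih => simpa [add_assoc] using hstep _ ih
  refine Subset.antisymm hB fun ⟨u, v⟩ huv => ?_
  obtain rfl : v = u + 1 := mem_cyclicOrientation.mp huv
  simpa using hall (u - i).val

end CycleGraph

theorem alonTarsiNumber_cycleGraph_of_even {k : ℕ} (hk : Even k) (h3 : 3 ≤ k) :
    alonTarsiNumber (cycleGraph k) = 2 := by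
  have : NeZero k := ⟨by omega⟩
  refine alonTarsiNumber_eq_succ (isOrientation_cyclicOrientation h3)
    (isATOrientation_of_forall_even fun B hB hE => ?_)
    (fun v => (arcOutDeg_cyclicOrientation v).le) fun A hA => ?_
  · rcases B.eq_empty_or_nonempty with rfl | hne
    · exact Even.zero
    · rw [eq_cyclicOrientation_of_isEulerianSub hB hE hne, cyclicOrientation, card_map,
        card_univ, Fintype.card_fin]
      exact hk
  · exact hA.exists_pos_arcOutDeg (cycleGraph_adj_add_one h3 0)

section SubdividedPath

variable {V W : Type*}

theorem subdivisionGraph_adj_inl_inr {G : SimpleGraph V} {u : V} {e : G.edgeSet} :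
    (subdivisionGraph G).Adj (.inl u) (.inr e) ↔ u ∈ (e : Sym2 V) := by
  simp [subdivisionGraph]

theorem subdivisionGraph_not_adj_inl_inl {G : SimpleGraph V} (u v : V) :
    ¬ (subdivisionGraph G).Adj (.inl u) (.inl v) := by
  simp [subdivisionGraph]

theorem subdivisionGraph_not_adj_inr_inr {G : SimpleGraph V} (e f : G.edgeSet) :
    ¬ (subdivisionGraph G).Adj (.inr e) (.inr f) := by
  simp [subdivisionGraph]

theorem fSum_adj {E : Type*} {K : SimpleGraph (V ⊕ E)} {H : SimpleGraph W}
    {a b : (V ⊕ E) × W} :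
    (fSum K H).Adj a b ↔
      (a.1 = b.1 ∧ (∃ u : V, a.1 = .inl u) ∧ H.Adj a.2 b.2) ∨
        (a.2 = b.2 ∧ K.Adj a.1 b.1) := by
  rw [fSum, fromRel_adj]
  constructor
  · rintro ⟨-, h | (⟨h₁, ⟨u, hu⟩, h₂⟩ | ⟨h₁, h₂⟩)⟩
    · exact h
    · exact Or.inl ⟨h₁.symm, ⟨u, h₁ ▸ hu⟩, h₂.symm⟩
    · exact Or.inr ⟨h₁.symm, h₂.symm⟩
  · intro h
    refine ⟨fun hab => ?_, Or.inl h⟩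
    subst hab
    rcases h with ⟨-, -, h⟩ | ⟨-, h⟩ <;> exact h.ne rfl

variable {n : ℕ}

theorem exists_eq_mk_of_mem_edgeSet_pathGraph {e : Sym2 (Fin n)}
    (he : e ∈ (pathGraph n).edgeSet) : ∃ i j : Fin n, i.val + 1 = j.val ∧ e = s(i, j) := by
  induction e using Sym2.ind with
  | h a b =>
    rcases pathGraph_adj.mp he with h | h
    · exact ⟨a, b, h, rfl⟩
    · exact ⟨b, a, h, Sym2.eq_swap⟩

/-- The position of a vertex along the path `S(P_n)`: vertex `i` sits at `2i` and the
subdivision vertex of the edge `{i, i + 1}` at `2i + 1`. -/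
def subdivPathCoord : Fin n ⊕ (pathGraph n).edgeSet → ℕ
  | .inl u => 2 * u
  | .inr e => 2 * ((Sym2.inf e.1 : Fin n) : ℕ) + 1

theorem subdivPathCoord_inr {e : (pathGraph n).edgeSet} {i j : Fin n} (hij : i.val + 1 = j.val)
    (he : e.1 = s(i, j)) : subdivPathCoord (.inr e) = 2 * i + 1 := by
  have : Sym2.inf e.1 = i := by
    rw [he, Sym2.inf_mk, inf_eq_left, Fin.le_def]
    omega
  simp [subdivPathCoord, this]

theorem subdivPathCoord_lt (x : Fin n ⊕ (pathGraph n).edgeSet) :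
    subdivPathCoord x < 2 * n - 1 := by
  rcases x with u | e
  · have := u.isLt
    simp only [subdivPathCoord]
    omega
  · obtain ⟨i, j, hij, he⟩ := exists_eq_mk_of_mem_edgeSet_pathGraph e.2
    have := j.isLt
    rw [subdivPathCoord_inr hij he]
    omega

theorem subdivPathCoord_injective : Function.Injective (subdivPathCoord (n := n)) := by
  intro x y hxy
  rcases x with u | e <;> rcases y with v | f
  · simp only [subdivPathCoord] at hxy
    exact congrArg _ (Fin.ext (by omega))
  · obtain ⟨i, j, hij, hf⟩ := exists_eq_mk_of_mem_edgeSet_pathGraph f.2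
    rw [subdivPathCoord_inr hij hf] at hxy
    simp only [subdivPathCoord] at hxy
    omega
  · obtain ⟨i, j, hij, he⟩ := exists_eq_mk_of_mem_edgeSet_pathGraph e.2
    rw [subdivPathCoord_inr hij he] at hxy
    simp only [subdivPathCoord] at hxy
    omega
  · obtain ⟨i, j, hij, he⟩ := exists_eq_mk_of_mem_edgeSet_pathGraph e.2
    obtain ⟨i', j', hij', hf⟩ := exists_eq_mk_of_mem_edgeSet_pathGraph f.2
    rw [subdivPathCoord_inr hij he, subdivPathCoord_inr hij' hf] at hxy
    have hi : i = i' := Fin.ext (by omega)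
    have hj : j = j' := Fin.ext (by omega)
    exact congrArg _ (Subtype.ext (by rw [he, hf, hi, hj]))

theorem exists_subdivPathCoord_eq {k : ℕ} (hk : k < 2 * n - 1) :
    ∃ x : Fin n ⊕ (pathGraph n).edgeSet, subdivPathCoord x = k := by
  rcases Nat.even_or_odd' k with ⟨i, rfl | rfl⟩
  · exact ⟨.inl ⟨i, by omega⟩, rfl⟩
  · let i₀ : Fin n := ⟨i, by omega⟩
    let i₁ : Fin n := ⟨i + 1, by omega⟩
    have hadj : (pathGraph n).Adj i₀ i₁ := pathGraph_adj.mpr (.inl rfl)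
    exact ⟨.inr ⟨_, hadj⟩, subdivPathCoord_inr (i := i₀) (j := i₁) rfl rfl⟩

theorem even_subdivPathCoord_iff {x : Fin n ⊕ (pathGraph n).edgeSet} :
    Even (subdivPathCoord x) ↔ ∃ u, x = .inl u := by
  rcases x with u | e
  · exact ⟨fun _ => ⟨u, rfl⟩, fun _ => even_two_mul _⟩
  · obtain ⟨i, j, hij, he⟩ := exists_eq_mk_of_mem_edgeSet_pathGraph e.2
    rw [subdivPathCoord_inr hij he]
    simp

theorem subdivisionGraph_pathGraph_adj_iff {x y : Fin n ⊕ (pathGraph n).edgeSet} :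
    (subdivisionGraph (pathGraph n)).Adj x y ↔
      subdivPathCoord x + 1 = subdivPathCoord y ∨ subdivPathCoord y + 1 = subdivPathCoord x := by
  have key : ∀ (u : Fin n) (e : (pathGraph n).edgeSet), u ∈ (e : Sym2 (Fin n)) ↔
      subdivPathCoord (.inl u) + 1 = subdivPathCoord (.inr e) ∨
        subdivPathCoord (.inr e) + 1 = subdivPathCoord (.inl u) := by
    intro u e
    obtain ⟨i, j, hij, he⟩ := exists_eq_mk_of_mem_edgeSet_pathGraph e.2
    rw [he, subdivPathCoord_inr hij he, Sym2.mem_iff, Fin.ext_iff, Fin.ext_iff]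
    simp only [subdivPathCoord]
    omega
  rcases x with u | e <;> rcases y with v | f
  · simp only [subdivisionGraph_not_adj_inl_inl, subdivPathCoord, false_iff]
    omega
  · exact subdivisionGraph_adj_inl_inr.trans (key u f)
  · exact ((subdivisionGraph _).adj_comm _ _).trans <| subdivisionGraph_adj_inl_inr.trans <|
      (key v e).trans or_comm
  · obtain ⟨i, j, hij, he⟩ := exists_eq_mk_of_mem_edgeSet_pathGraph e.2
    obtain ⟨i', j', hij', hf⟩ := exists_eq_mk_of_mem_edgeSet_pathGraph f.2
    rw [subdivPathCoord_inr hij he, subdivPathCoord_inr hij' hf]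
    simp only [subdivisionGraph_not_adj_inr_inr, false_iff]
    omega

end SubdividedPath

section SGrid

/-- `P_{(a+1)/2} +_S P_b` in coordinates: `S(P_·)` is the path on the columns `Fin a`, whose
even columns are the original vertices. -/
def sGrid (a b : ℕ) : SimpleGraph (Fin a × Fin b) where
  Adj p q :=
    (p.1 = q.1 ∧ Even (p.1 : ℕ) ∧ (p.2.val + 1 = q.2.val ∨ q.2.val + 1 = p.2.val)) ∨
      (p.2 = q.2 ∧ (p.1.val + 1 = q.1.val ∨ q.1.val + 1 = p.1.val))
  symm := ⟨by
    rintro p q (⟨h₁, h₂, h₃⟩ | ⟨h₁, h₃⟩)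
    · exact .inl ⟨h₁.symm, h₁ ▸ h₂, h₃.symm⟩
    · exact .inr ⟨h₁.symm, h₃.symm⟩⟩
  loopless := ⟨by rintro p (⟨-, -, h⟩ | ⟨-, h⟩) <;> omega⟩

instance (a b : ℕ) : DecidableRel (sGrid a b).Adj := fun p q =>
  inferInstanceAs (Decidable
    ((p.1 = q.1 ∧ Even (p.1 : ℕ) ∧ (p.2.val + 1 = q.2.val ∨ q.2.val + 1 = p.2.val)) ∨
      (p.2 = q.2 ∧ (p.1.val + 1 = q.1.val ∨ q.1.val + 1 = p.1.val))))

noncomputable def subdivisionGraphPathGraphIso (n : ℕ) :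
    subdivisionGraph (pathGraph n) ≃g pathGraph (2 * n - 1) where
  toEquiv := Equiv.ofBijective (fun x => ⟨subdivPathCoord x, subdivPathCoord_lt x⟩)
    ⟨fun _ _ h => subdivPathCoord_injective (Fin.val_eq_of_eq h),
      fun k => (exists_subdivPathCoord_eq k.2).imp fun _ hx => Fin.ext hx⟩
  map_rel_iff' := by
    intro x y
    rw [pathGraph_adj, subdivisionGraph_pathGraph_adj_iff]
    rfl

noncomputable def sSumPathGraphIso (n m : ℕ) :
    sSum (pathGraph n) (pathGraph m) ≃g sGrid (2 * n - 1) m where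
  toEquiv := (subdivisionGraphPathGraphIso n).toEquiv.prodCongr (Equiv.refl _)
  map_rel_iff' := by
    rintro ⟨x, r⟩ ⟨y, s⟩
    have hx : ∀ z, ((subdivisionGraphPathGraphIso n).toEquiv z : ℕ) = subdivPathCoord z :=
      fun _ => rfl
    simp only [sGrid, sSum, fSum_adj, Equiv.prodCongr_apply, Prod.map, Equiv.refl_apply,
      Fin.ext_iff, hx, subdivPathCoord_injective.eq_iff, even_subdivPathCoord_iff,
      subdivisionGraph_pathGraph_adj_iff, pathGraph_adj]

theorem arcOutDeg_potentialOrientation_sGrid_le {a b : ℕ} (v : Fin a × Fin b) :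
    arcOutDeg (potentialOrientation (sGrid a b) fun p => p.1.val + p.2.val) v ≤ 2 := by
  refine card_le_card_of_injOn (t := (univ : Finset Bool)) (fun a => decide (a.2.2 = v.2))
    (fun _ _ => mem_univ _) ?_
  rintro ⟨⟨p₁, p₂⟩, q₁, q₂⟩ hp ⟨⟨p₁', p₂'⟩, q₁', q₂'⟩ hq h
  simp only [mem_coe, mem_filter, mem_potentialOrientation, sGrid] at hp hq
  obtain ⟨⟨hadj, hlt⟩, rfl⟩ := hp
  obtain ⟨⟨hadj', hlt'⟩, hp'⟩ := hq
  simp only [decide_eq_decide] at h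
  simp only [Prod.mk.injEq, Fin.ext_iff] at hadj hadj' hp' h ⊢
  omega

theorem exists_isATOrientation_sGrid (a b : ℕ) :
    ∃ A, IsOrientation (sGrid a b) A ∧ IsATOrientation A ∧ ∀ v, arcOutDeg A v ≤ 2 := by
  refine ⟨_, isOrientation_potentialOrientation ?_, isATOrientation_potentialOrientation _ _,
    arcOutDeg_potentialOrientation_sGrid_le⟩
  rintro p q (⟨h, -, hr⟩ | ⟨h, hc⟩) <;> rw [h] <;> omega

def sGrid.castLEHom {a a' b b' : ℕ} (ha : a ≤ a') (hb : b ≤ b') :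
    sGrid a b →g sGrid a' b' where
  toFun p := (Fin.castLE ha p.1, Fin.castLE hb p.2)
  map_rel' h := by simpa [sGrid, Fin.ext_iff] using h

theorem sGrid.castLEHom_injective {a a' b b' : ℕ} (ha : a ≤ a') (hb : b ≤ b') :
    Function.Injective (sGrid.castLEHom ha hb) :=
  (Fin.castLE_injective ha).prodMap (Fin.castLE_injective hb)

/-- `sGrid 5 2` has `11` edges on `10` vertices, `sGrid 3 3` has `10` edges on `9` vertices. -/
theorem exists_two_le_arcOutDeg_sGrid {a b : ℕ} (h : 5 ≤ a ∧ 2 ≤ b ∨ 3 ≤ a ∧ 3 ≤ b)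
    {A : Finset ((Fin a × Fin b) × (Fin a × Fin b))} (hA : IsOrientation (sGrid a b) A) :
    ∃ v, 2 ≤ arcOutDeg A v := by
  rcases h with ⟨ha, hb⟩ | ⟨ha, hb⟩
  · exact exists_lt_arcOutDeg_of_hom _ (sGrid.castLEHom_injective ha hb) hA (by decide)
  · exact exists_lt_arcOutDeg_of_hom _ (sGrid.castLEHom_injective ha hb) hA (by decide)

noncomputable def cycleGraphIsoSGrid : cycleGraph 6 ≃g sGrid 3 2 where
  toEquiv := Equiv.ofBijective ![(0, 0), (1, 0), (2, 0), (2, 1), (1, 1), (0, 1)] (by decide)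
  map_rel_iff' := by decide

end SGrid

/-- `AT(P_n +_S P_m) = 2` if `n = 2` and `m = 2`, and `= 3` otherwise. -/
theorem stmt5 (n m : ℕ) (hn : 2 ≤ n) (hm : 2 ≤ m) :
    alonTarsiNumber (sSum (SimpleGraph.pathGraph n) (SimpleGraph.pathGraph m)) =
      if n = 2 ∧ m = 2 then 2 else 3 := by
  rw [alonTarsiNumber_congr (sSumPathGraphIso n m)]
  split_ifs with h
  · obtain ⟨rfl, rfl⟩ := h
    rw [← alonTarsiNumber_congr cycleGraphIsoSGrid]
    exact alonTarsiNumber_cycleGraph_of_even (by decide) (by norm_num)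
  · obtain ⟨A, hA, hAT, hle⟩ := exists_isATOrientation_sGrid (2 * n - 1) m
    exact alonTarsiNumber_eq_succ hA hAT hle fun A' hA' =>
      exists_two_le_arcOutDeg_sGrid (by omega) hA'
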